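/- Let Q > 0 be a random variable whose logarithm X = log Q is symmetric about 0. Then for 0 < t ≤ 1, E[t/(t + Q)] ≥ (1 + (1/t - 3)·P(Q < t)/2) / (1 + 1/t). In particular, if t ≤ 1/3 then E[t/(t+Q)] ≥ 1/(1 + 1/t). -/

import Mathlib

/-!
Since `log Q` is symmetric, `Q` and `Q⁻¹` are identically distributed, so
`2 E[t/(t+Q)] = E[g(Q)]` with `g(q) = t/(t+q) + t/(t+q⁻¹)`. For `t ≤ 1` one has
`g ≥ 2t/(1+t)` everywhere, and `g ≥ 1/2` on the event `{Q < t} ∪ {Q⁻¹ < t}`, where one of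
the two summands already exceeds `1/2`. The two tails of this event are disjoint and have
the same probability `P(Q < t)`, and integrating the two pointwise bounds gives the claim.
-/

open MeasureTheory ProbabilityTheory

section Pointwise

variable {t q : ℝ}

lemma two_mul_div_one_add_le_div_add_div_inv (ht0 : 0 ≤ t) (ht1 : t ≤ 1) (hq : 0 < q) :
    2 * t / (1 + t) ≤ t / (t + q) + t / (t + q⁻¹) := by
  have hdiff : t / (t + q) + t / (t + q⁻¹) - 2 * t / (1 + t)
      = t * (1 - t) * (q - 1) ^ 2 / ((t + q) * (t * q + 1) * (1 + t)) := by
    field_simp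
    ring
  have : 0 ≤ t * (1 - t) * (q - 1) ^ 2 / ((t + q) * (t * q + 1) * (1 + t)) := by
    have : 0 ≤ 1 - t := by linarith
    positivity
  linarith

lemma one_half_lt_div_add_of_lt (hq : 0 ≤ q) (hqt : q < t) : 1 / 2 < t / (t + q) := by
  rw [lt_div_iff₀ (by linarith)]
  linarith

lemma one_half_le_div_add_div_inv (ht : 0 < t) (hq : 0 < q) (h : q < t ∨ q⁻¹ < t) :
    1 / 2 ≤ t / (t + q) + t / (t + q⁻¹) := by
  have h₁ : 0 ≤ t / (t + q) := by positivity
  have h₂ : 0 ≤ t / (t + q⁻¹) := by positivity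
  rcases h with h | h
  · linarith [one_half_lt_div_add_of_lt hq.le h]
  · linarith [one_half_lt_div_add_of_lt (inv_pos.2 hq).le h]

lemma not_lt_and_inv_lt (ht1 : t ≤ 1) (hq : 0 < q) : ¬(q < t ∧ q⁻¹ < t) := by
  rintro ⟨h, hinv⟩
  have : q * q⁻¹ < t * t := mul_lt_mul'' h hinv hq.le (inv_pos.2 hq).le
  rw [mul_inv_cancel₀ hq.ne'] at this
  nlinarith

end Pointwise

section Probability

variable {Ω : Type*} [MeasurableSpace Ω] {μ : Measure Ω}

lemma add_sub_mul_measureReal_le_integral [IsProbabilityMeasure μ] {f : Ω → ℝ} {A : Set Ω}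
    {a b : ℝ} (hf : Integrable f μ) (hA : MeasurableSet A) (hb : ∀ ω ∈ A, b ≤ f ω)
    (ha : ∀ ω ∈ Aᶜ, a ≤ f ω) :
    a + (b - a) * μ.real A ≤ ∫ ω, f ω ∂μ := by
  have hin := setIntegral_ge_of_const_le hA (measure_ne_top _ _) hb hf.integrableOn
  have hout := setIntegral_ge_of_const_le hA.compl (measure_ne_top _ _) ha hf.integrableOn
  rw [probReal_compl_eq_one_sub hA, smul_eq_mul] at hout
  rw [smul_eq_mul] at hin
  rw [← integral_add_compl hA hf]
  linarith

lemma identDistrib_inv_of_map_log_eq {Q : Ω → ℝ} (hQ : Measurable Q) (hQpos : ∀ ω, 0 < Q ω)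
    (hsym : μ.map (fun ω => Real.log (Q ω)) = μ.map (fun ω => -Real.log (Q ω))) :
    IdentDistrib Q (fun ω => (Q ω)⁻¹) μ μ := by
  have hlog : IdentDistrib (fun ω => Real.log (Q ω)) (fun ω => -Real.log (Q ω)) μ μ :=
    ⟨hQ.log.aemeasurable, hQ.log.neg.aemeasurable, hsym⟩
  convert hlog.comp Real.measurable_exp using 1 <;> funext ω <;>
    simp [Real.exp_neg, Real.exp_log (hQpos ω)]

lemma integrable_div_add [IsFiniteMeasure μ] {R : Ω → ℝ} {t : ℝ} (hR : Measurable R)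
    (ht : 0 ≤ t) (hRnonneg : ∀ ω, 0 ≤ R ω) : Integrable (fun ω => t / (t + R ω)) μ :=
  Integrable.of_bound (by fun_prop : Measurable _).aestronglyMeasurable 1 <| .of_forall fun ω => by
    have := hRnonneg ω
    rw [Real.norm_of_nonneg (by positivity)]
    exact div_le_one_of_le₀ (by linarith) (by positivity)

theorem le_integral_div_add_of_identDistrib_inv [IsProbabilityMeasure μ] {Q : Ω → ℝ}
    (hQ : Measurable Q) (hQpos : ∀ ω, 0 < Q ω) (hid : IdentDistrib Q (fun ω => (Q ω)⁻¹) μ μ)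
    {t : ℝ} (ht0 : 0 < t) (ht1 : t ≤ 1) :
    (2 * t + (1 - 3 * t) * μ.real {ω | Q ω < t}) / (2 * (1 + t)) ≤ ∫ ω, t / (t + Q ω) ∂μ := by
  set p := μ.real {ω | Q ω < t}
  have hQinv : Measurable fun ω => (Q ω)⁻¹ := hQ.inv
  have hint₁ := integrable_div_add (μ := μ) hQ ht0.le fun ω => (hQpos ω).le
  have hint₂ := integrable_div_add (μ := μ) hQinv ht0.le fun ω => (inv_pos.2 (hQpos ω)).le
  have hswap : ∫ ω, t / (t + (Q ω)⁻¹) ∂μ = ∫ ω, t / (t + Q ω) ∂μ :=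
    (hid.comp (by fun_prop : Measurable fun x : ℝ => t / (t + x))).integral_eq.symm
  have htail : μ.real {ω | (Q ω)⁻¹ < t} = p :=
    congrArg ENNReal.toReal (hid.measure_mem_eq measurableSet_Iio).symm
  have hdisj : Disjoint {ω | Q ω < t} {ω | (Q ω)⁻¹ < t} :=
    Set.disjoint_left.2 fun ω h h' => not_lt_and_inv_lt ht1 (hQpos ω) ⟨h, h'⟩
  have hA : μ.real ({ω | Q ω < t} ∪ {ω | (Q ω)⁻¹ < t}) = 2 * p := by
    rw [measureReal_union hdisj (measurableSet_lt hQinv measurable_const), htail]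
    ring
  have hbound := add_sub_mul_measureReal_le_integral (μ := μ)
    (f := fun ω => t / (t + Q ω) + t / (t + (Q ω)⁻¹)) (a := 2 * t / (1 + t)) (b := 1 / 2)
    (hint₁.add hint₂)
    ((measurableSet_lt hQ measurable_const).union (measurableSet_lt hQinv measurable_const))
    (fun ω hω => one_half_le_div_add_div_inv ht0 (hQpos ω) hω)
    (fun ω _ => two_mul_div_one_add_le_div_add_div_inv ht0.le ht1 (hQpos ω))
  rw [integral_add hint₁ hint₂, hswap, hA] at hbound
  have : (2 * t + (1 - 3 * t) * p) / (2 * (1 + t))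
      = (2 * t / (1 + t) + (1 / 2 - 2 * t / (1 + t)) * (2 * p)) / 2 := by
    field_simp
    ring
  linarith

end Probability

/-- Let `Q > 0` be a random variable whose logarithm is symmetric about `0`. Then for
`0 < t ≤ 1`, `E[t/(t+Q)] ≥ (1 + (1/t - 3) P(Q < t)/2)/(1 + 1/t)`; in particular, if
`t ≤ 1/3` then `E[t/(t+Q)] ≥ 1/(1 + 1/t)`. -/
theorem F_lower_bound {Ω : Type*} [MeasurableSpace Ω] (μ : Measure Ω)
    [IsProbabilityMeasure μ] (Q : Ω → ℝ) (hQ : Measurable Q) (hQpos : ∀ ω, 0 < Q ω)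
    (hsym : Measure.map (fun ω => Real.log (Q ω)) μ
      = Measure.map (fun ω => -Real.log (Q ω)) μ)
    (t : ℝ) (ht0 : 0 < t) (ht1 : t ≤ 1) :
    (1 + (1 / t - 3) * (μ {ω | Q ω < t}).toReal / 2) / (1 + 1 / t)
      ≤ ∫ ω, t / (t + Q ω) ∂μ ∧
    (t ≤ 1 / 3 → 1 / (1 + 1 / t) ≤ ∫ ω, t / (t + Q ω) ∂μ) := by
  have hF := le_integral_div_add_of_identDistrib_inv hQ hQpos
    (identDistrib_inv_of_map_log_eq hQ hQpos hsym) ht0 ht1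
  rw [measureReal_def] at hF
  set p := (μ {ω | Q ω < t}).toReal
  have hform : (1 + (1 / t - 3) * p / 2) / (1 + 1 / t)
      = (2 * t + (1 - 3 * t) * p) / (2 * (1 + t)) := by
    field_simp
    ring
  refine ⟨hform ▸ hF, fun ht3 => le_trans ?_ hF⟩
  calc 1 / (1 + 1 / t) = (2 * t + 0) / (2 * (1 + t)) := by field_simp; ring
    _ ≤ (2 * t + (1 - 3 * t) * p) / (2 * (1 + t)) := by
      gcongr
      exact mul_nonneg (by linarith) ENNReal.toReal_nonneg
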